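/- Removing a vertex together with its incident edges from an extendable PDAG yields an extendable PDAG. -/

import Mathlib

/-- A partially directed graph: arcs `A` and undirected edges `E`,
with at most one edge between any pair of vertices. -/
structure PDGraph (V : Type*) where
  A : V → V → Prop
  E : V → V → Prop
  E_symm : ∀ u v, E u v → E v u
  A_irrefl : ∀ v, ¬ A v v
  E_irrefl : ∀ v, ¬ E v v
  no_two_cycle : ∀ u v, A u v → ¬ A v u
  not_both : ∀ u v, A u v → ¬ E u v

namespace PDGraph

variable {V : Type*}

/-- No directed cycle: a partially directed graph satisfying this is a PDAG. -/
def acyclic (G : PDGraph V) : Prop := ∀ v, ¬ Relation.TransGen G.A v v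

/-- `u` and `v` are adjacent. -/
def adj (G : PDGraph V) (u v : V) : Prop := G.A u v ∨ G.A v u ∨ G.E u v

/-- `v` is a potential-sink: no children, and every sibling of `v` is
adjacent to all other neighbors of `v`. -/
def potentialSink (G : PDGraph V) (v : V) : Prop :=
  (∀ x, ¬ G.A v x) ∧ ∀ y, G.E y v → ∀ z, G.adj z v → z ≠ y → G.adj y z

/-- A v-structure `u → m ← w` with `u`, `w` non-adjacent. -/
def vStructure (G : PDGraph V) (u m w : V) : Prop :=
  G.A u m ∧ G.A w m ∧ u ≠ w ∧ ¬ G.adj u w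

/-- A DAG: acyclic with no undirected edges. -/
def isDAG (G : PDGraph V) : Prop := G.acyclic ∧ ∀ u v, ¬ G.E u v

/-- `D` is a consistent extension of `G`. -/
def consExt (D G : PDGraph V) : Prop :=
  D.isDAG ∧ (∀ u v, D.adj u v ↔ G.adj u v) ∧ (∀ u v, G.A u v → D.A u v) ∧
  (∀ u m w, D.vStructure u m w ↔ G.vStructure u m w)

/-- `G` is extendable. -/
def extendable (G : PDGraph V) : Prop := ∃ D : PDGraph V, consExt D G

/-- Induced subgraph on a vertex set `S`. -/
def induce (G : PDGraph V) (S : Set V) : PDGraph S where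
  A a b := G.A a b
  E a b := G.E a b
  E_symm := fun u v h => G.E_symm u v h
  A_irrefl := fun v => G.A_irrefl v
  E_irrefl := fun v => G.E_irrefl v
  no_two_cycle := fun u v h => G.no_two_cycle u v h
  not_both := fun u v h => G.not_both u v h

end PDGraph

namespace PDGraph

variable {V : Type*} {S : Set V}

theorem acyclic.induce {G : PDGraph V} (hG : G.acyclic) : (G.induce S).acyclic :=
  fun v hv => hG v (hv.lift Subtype.val fun _ _ h => h)

theorem isDAG.induce {G : PDGraph V} (hG : G.isDAG) : (G.induce S).isDAG :=
  ⟨hG.1.induce, fun u v => hG.2 u v⟩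

theorem adj_induce (G : PDGraph V) (u v : S) : (G.induce S).adj u v ↔ G.adj u v :=
  Iff.rfl

theorem vStructure_induce (G : PDGraph V) (u m w : S) :
    (G.induce S).vStructure u m w ↔ G.vStructure u m w := by
  simp only [vStructure, ne_eq, Subtype.ext_iff, adj_induce]
  rfl

theorem consExt.induce {D G : PDGraph V} (h : consExt D G) :
    consExt (D.induce S) (G.induce S) := by
  obtain ⟨hD, hadj, hA, hvs⟩ := h
  refine ⟨hD.induce, fun u v => ?_, fun u v => hA u v, fun u m w => ?_⟩
  · rw [adj_induce, adj_induce]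
    exact hadj u v
  · rw [vStructure_induce, vStructure_induce]
    exact hvs u m w

theorem extendable.induce {G : PDGraph V} (hG : G.extendable) : (G.induce S).extendable :=
  let ⟨D, hD⟩ := hG
  ⟨D.induce S, hD.induce⟩

end PDGraph

open PDGraph

theorem stmt_4_general {V : Type*} (G : PDGraph V)
    (hext : G.extendable) (w : V) :
    (G.induce {x | x ≠ w}).extendable :=
  hext.induce

/-- Removing a vertex together with its incident edges from an extendable PDAG
yields an extendable PDAG. -/
theorem stmt_4 {V : Type*} (G : PDGraph V) (hG : G.acyclic)
    (hext : G.extendable) (w : V) :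
    (G.induce {x | x ≠ w}).extendable :=
  stmt_4_general G hext w
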